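/- Let F : ({0,1}^l)^N → ({0,1}^l)^N be the map sending an initial state s(0) of the generalized counter with parameters N and l to the state s(N) obtained after N time steps (starting at time 0, so mode(0) = switch). Then F has a periodic orbit of length at least 2^{Nl}; in particular the 2^{Nl} states F^k(0,...,0) for k = 0, 1, ..., 2^{Nl} − 1 are pairwise distinct. -/

import Mathlib

/-!
Following a trajectory for `N` steps, block `i` of `s(N)` is block `i` of `s(0)`, incremented
exactly when all blocks before it are all-ones: the mode stays `switch` only as long as the
blocks passing through position 1 are all-ones. Reading a state as a number in base `2^l` whose
`i`-th digit is `β` of block `i`, this is ripple-carry addition of `1`, so `F` is conjugate to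
`n ↦ n + 1 mod 2^(N·l)`, a single cycle through all `2^(N·l)` states.
-/

/-- The two modes of the counter. -/
inductive Mode : Type
  | rotate : Mode
  | switch : Mode
deriving DecidableEq

/-- `β(x) = x^1·2^0 + x^2·2^1 + ⋯ + x^l·2^(l-1)` (0-indexed: bit `j` has weight `2^j`). -/
def beta {l : ℕ} (x : Fin l → Bool) : ℕ :=
  ∑ j : Fin l, (x j).toNat * 2 ^ (j : ℕ)

/-- Binary increment modulo `2^l`: the unique `y : {0,1}^l` with
`β(y) = β(x) + 1 mod 2^l`. -/
def binInc {l : ℕ} (x : Fin l → Bool) : Fin l → Bool :=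
  fun j => ((beta x + 1) % 2 ^ l).testBit (j : ℕ)

/-- A trajectory `s` (with mode sequence `mode`) of the generalized counter
with parameters `N` and `l`, started at time `0` (so `mode 0 = switch`).
Coordinates are `0`-indexed: coordinate `i` corresponds to `s_{i+1}`. -/
def GenCounterTraj {N l : ℕ} (hN : 0 < N)
    (s : ℕ → Fin N → Fin l → Bool) (mode : ℕ → Mode) : Prop :=
  (∀ (t : ℕ) (i : Fin N) (h : (i : ℕ) + 1 < N),
      s (t + 1) i = s t ⟨(i : ℕ) + 1, h⟩) ∧
  (∀ t : ℕ, s (t + 1) ⟨N - 1, Nat.sub_lt hN one_pos⟩ =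
      (if mode t = Mode.switch then binInc (s t ⟨0, hN⟩) else s t ⟨0, hN⟩)) ∧
  (∀ t : ℕ, N ∣ t → mode t = Mode.switch) ∧
  (∀ t : ℕ, ¬ N ∣ (t + 1) →
      mode (t + 1) =
        (if s t ⟨0, hN⟩ = (fun _ => true) then mode t else Mode.rotate))

theorem carry_add_one_mod_mul {a v B M : ℕ} (ha : a < B) (hv : v < M) :
    (a + 1) % B + B * (if a + 1 = B then (v + 1) % M else v) = (a + B * v + 1) % (B * M) := by
  split_ifs with hcarry
  · rw [hcarry, Nat.mod_self, zero_add, ← Nat.mul_mod_mul_left]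
    congr 1
    rw [← hcarry]; ring
  · have hlt : a + B * v + 1 < B * M := by
      calc a + B * v + 1 < B + B * v := by omega
        _ = B * (v + 1) := by ring
        _ ≤ B * M := Nat.mul_le_mul_left B hv
    rw [Nat.mod_eq_of_lt (by omega : a + 1 < B), Nat.mod_eq_of_lt hlt]
    ring

theorem Fin.sum_mul_pow_succ {N B : ℕ} (f : Fin (N + 1) → ℕ) :
    ∑ i, f i * B ^ (i : ℕ) = f 0 + B * ∑ i : Fin N, f i.succ * B ^ (i : ℕ) := by
  simp only [Fin.sum_univ_succ, Fin.val_zero, pow_zero, mul_one, Fin.val_succ, pow_succ',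
    Finset.mul_sum]
  congr 1
  exact Finset.sum_congr rfl fun i _ => by ring

theorem sum_mul_pow_ripple_carry {B : ℕ} :
    ∀ {N : ℕ} (d : Fin N → ℕ), (∀ i, d i < B) →
    ∑ i, (if ∀ j < i, d j + 1 = B then (d i + 1) % B else d i) * B ^ (i : ℕ) =
      (∑ i, d i * B ^ (i : ℕ) + 1) % B ^ N
  | 0, _, _ => by simp
  | N + 1, d, hd => by
    have hcond (i : Fin N) : (∀ j < i.succ, d j + 1 = B) ↔
        d 0 + 1 = B ∧ ∀ j < i, d j.succ + 1 = B := by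
      simp [Fin.forall_fin_succ, Fin.succ_pos]
    have htail : ∑ i : Fin N, (if ∀ j < i.succ, d j + 1 = B then (d i.succ + 1) % B
        else d i.succ) * B ^ (i : ℕ) =
        if d 0 + 1 = B then (∑ i : Fin N, d i.succ * B ^ (i : ℕ) + 1) % B ^ N
        else ∑ i : Fin N, d i.succ * B ^ (i : ℕ) := by
      simp only [hcond]
      split_ifs with h0
      · simpa [h0] using sum_mul_pow_ripple_carry (fun i : Fin N => d i.succ) fun i => hd i.succ
      · simp [h0]
    rw [Fin.sum_mul_pow_succ, Fin.sum_mul_pow_succ, htail, pow_succ']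
    simp only [Fin.not_lt_zero, IsEmpty.forall_iff, implies_true, if_true]
    exact carry_add_one_mod_mul (hd 0) <|
      (finFunctionFinEquiv fun i : Fin N => (⟨d i.succ, hd i.succ⟩ : Fin B)).isLt

theorem beta_eq_finFunctionFinEquiv {l : ℕ} (x : Fin l → Bool) :
    beta x = finFunctionFinEquiv (fun j => (⟨(x j).toNat, Bool.toNat_lt _⟩ : Fin 2)) :=
  rfl

theorem beta_lt {l : ℕ} (x : Fin l → Bool) : beta x < 2 ^ l := by
  rw [beta_eq_finFunctionFinEquiv]; exact Fin.isLt _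

theorem beta_injective {l : ℕ} : Function.Injective (beta : (Fin l → Bool) → ℕ) := by
  intro x y h
  simp only [beta_eq_finFunctionFinEquiv, Fin.val_inj, EmbeddingLike.apply_eq_iff_eq,
    funext_iff, Fin.mk.injEq] at h
  funext j
  have := h j
  revert this
  cases x j <;> cases y j <;> simp

theorem beta_testBit {l n : ℕ} (hn : n < 2 ^ l) :
    beta (fun j : Fin l => n.testBit j) = n := by
  have hdigits : (fun j : Fin l => (⟨(n.testBit j).toNat, Bool.toNat_lt _⟩ : Fin 2)) =
      finFunctionFinEquiv.symm ⟨n, hn⟩ := by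
    ext j
    simp [Nat.toNat_testBit]
  rw [beta_eq_finFunctionFinEquiv, hdigits, Equiv.apply_symm_apply]

theorem beta_binInc {l : ℕ} (x : Fin l → Bool) : beta (binInc x) = (beta x + 1) % 2 ^ l :=
  beta_testBit (Nat.mod_lt _ (by positivity))

theorem eq_allOnes_iff_beta_add_one {l : ℕ} (x : Fin l → Bool) :
    x = (fun _ => true) ↔ beta x + 1 = 2 ^ l := by
  have hones : beta (fun _ : Fin l => true) = 2 ^ l - 1 := by
    simpa using beta_testBit (l := l) (n := 2 ^ l - 1) (by simp)
  rw [← beta_injective.eq_iff, hones]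
  have := Nat.one_le_two_pow (n := l)
  omega

def counterStep {N l : ℕ} (x : Fin N → Fin l → Bool) : Fin N → Fin l → Bool :=
  fun i => if ∀ j < i, x j = fun _ => true then binInc (x i) else x i

def stateCode {N l : ℕ} (x : Fin N → Fin l → Bool) : ℕ :=
  ∑ i, beta (x i) * (2 ^ l) ^ (i : ℕ)

theorem stateCode_eq_finFunctionFinEquiv {N l : ℕ} (x : Fin N → Fin l → Bool) :
    stateCode x = finFunctionFinEquiv (fun i => (⟨beta (x i), beta_lt _⟩ : Fin (2 ^ l))) :=
  rfl

theorem stateCode_lt {N l : ℕ} (x : Fin N → Fin l → Bool) : stateCode x < 2 ^ (N * l) := by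
  rw [stateCode_eq_finFunctionFinEquiv, mul_comm, pow_mul]
  exact Fin.isLt _

theorem stateCode_injective {N l : ℕ} :
    Function.Injective (stateCode : (Fin N → Fin l → Bool) → ℕ) := by
  intro x y h
  simp only [stateCode_eq_finFunctionFinEquiv, Fin.val_inj, EmbeddingLike.apply_eq_iff_eq,
    funext_iff, Fin.mk.injEq] at h
  exact funext fun i => beta_injective (h i)

theorem stateCode_counterStep {N l : ℕ} (x : Fin N → Fin l → Bool) :
    stateCode (counterStep x) = (stateCode x + 1) % 2 ^ (N * l) := by
  have hdigit (i : Fin N) : beta (counterStep x i) =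
      if ∀ j < i, beta (x j) + 1 = 2 ^ l then (beta (x i) + 1) % 2 ^ l else beta (x i) := by
    simp only [counterStep, eq_allOnes_iff_beta_add_one]
    split_ifs
    · exact beta_binInc _
    · rfl
  simp only [stateCode, hdigit]
  rw [sum_mul_pow_ripple_carry _ fun i => beta_lt (x i), mul_comm, pow_mul]

namespace GenCounterTraj

variable {N l : ℕ} {hN : 0 < N} {s : ℕ → Fin N → Fin l → Bool} {mode : ℕ → Mode}

theorem state_add (h : GenCounterTraj hN s mode) (t : ℕ) :
    ∀ (d k : ℕ) (hk : k + d < N), s (t + d) ⟨k, by omega⟩ = s t ⟨k + d, hk⟩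
  | 0, _, _ => rfl
  | d + 1, k, hk => by
    rw [← add_assoc, h.1 _ _ (show k + 1 < N by omega)]
    exact (state_add h t d (k + 1) (by omega)).trans (congrArg _ (Fin.ext (by simp only; omega)))

theorem state_head (h : GenCounterTraj hN s mode) (t : ℕ) (ht : t < N) :
    s t ⟨0, hN⟩ = s 0 ⟨t, ht⟩ := by
  simpa using h.state_add 0 t 0 (by omega)

theorem mode_eq_switch_iff (h : GenCounterTraj hN s mode) :
    ∀ t < N, (mode t = Mode.switch ↔ ∀ j : Fin N, (j : ℕ) < t → s 0 j = fun _ => true)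
  | 0, _ => by simpa using h.2.2.1 0 (dvd_zero N)
  | t + 1, ht => by
    have hmode := h.2.2.2 t (Nat.not_dvd_of_pos_of_lt t.succ_pos ht)
    rw [hmode, h.state_head t (by omega)]
    split_ifs with hones
    · rw [h.mode_eq_switch_iff t (by omega)]
      refine ⟨fun hall j hj => ?_, fun hall j hj => hall j (by omega)⟩
      rcases Nat.lt_succ_iff_lt_or_eq.1 hj with hj | hj
      · exact hall j hj
      · rwa [show j = ⟨t, by omega⟩ from Fin.ext hj]
    · simp only [false_iff, not_forall]
      exact ⟨⟨t, by omega⟩, by simp, hones⟩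

theorem state_N (h : GenCounterTraj hN s mode) : s N = counterStep (s 0) := by
  funext ⟨k, hk⟩
  obtain ⟨d, rfl⟩ : ∃ d, N = k + 1 + d := ⟨N - 1 - k, by omega⟩
  have hlast : (⟨k + d, by omega⟩ : Fin (k + 1 + d)) = ⟨k + 1 + d - 1, by omega⟩ :=
    Fin.ext (by simp only; omega)
  rw [h.state_add (k + 1) d k (by omega), hlast, h.2.1, h.state_head k hk, counterStep]
  simp only [Fin.lt_def, h.mode_eq_switch_iff k hk]

end GenCounterTraj

def counterTraj {N l : ℕ} (hN : 0 < N) (x : Fin N → Fin l → Bool) :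
    ℕ → (Fin N → Fin l → Bool) × Mode
  | 0 => (x, Mode.switch)
  | t + 1 =>
    let (y, m) := counterTraj hN x t
    (fun i => if h : (i : ℕ) + 1 < N then y ⟨i + 1, h⟩
        else if m = Mode.switch then binInc (y ⟨0, hN⟩) else y ⟨0, hN⟩,
      if N ∣ t + 1 then Mode.switch
        else if y ⟨0, hN⟩ = (fun _ => true) then m else Mode.rotate)

theorem genCounterTraj_counterTraj {N l : ℕ} (hN : 0 < N) (x : Fin N → Fin l → Bool) :
    GenCounterTraj hN (fun t => (counterTraj hN x t).1) (fun t => (counterTraj hN x t).2) := by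
  refine ⟨fun t i h => by simp [counterTraj, h],
    fun t => by simp [counterTraj, show ¬N - 1 + 1 < N by omega], ?_,
    fun t ht => by simp [counterTraj, ht]⟩
  rintro (_ | t) ht
  · rfl
  · simp [counterTraj, ht]

theorem code_iterate_eq_add_mod {α : Type*} {f : α → α} {code : α → ℕ} {M : ℕ}
    (hf : ∀ x, code (f x) = (code x + 1) % M) {x : α} (hx : code x < M) (k : ℕ) :
    code (f^[k] x) = (code x + k) % M := by
  induction k with
  | zero => exact (Nat.mod_eq_of_lt hx).symm
  | succ k ih => rw [Function.iterate_succ_apply', hf, ih, Nat.mod_add_mod, add_assoc]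

/-- If `F` maps each initial state `s(0)` of the generalized counter with
parameters `N` and `l` to the state `s(N)` obtained after `N` steps, then `F`
has a periodic orbit of length at least `2^(N·l)`; in particular the states
`F^[k] (0,…,0)` for `k = 0, …, 2^(N·l) - 1` are pairwise distinct. -/
theorem stmt4 (N l : ℕ) (hN : 0 < N)
    (F : (Fin N → Fin l → Bool) → (Fin N → Fin l → Bool))
    (hF : ∀ (s : ℕ → Fin N → Fin l → Bool) (mode : ℕ → Mode),
      GenCounterTraj hN s mode → F (s 0) = s N) :
    (∃ (x : Fin N → Fin l → Bool) (p : ℕ),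
      2 ^ (N * l) ≤ p ∧ F^[p] x = x ∧ ∀ k : ℕ, 0 < k → k < p → F^[k] x ≠ x) ∧
    (∀ k₁ k₂ : ℕ, k₁ < 2 ^ (N * l) → k₂ < 2 ^ (N * l) →
      F^[k₁] (fun _ _ => false) = F^[k₂] (fun _ _ => false) → k₁ = k₂) := by
  have hFstep (x : Fin N → Fin l → Bool) : F x = counterStep x :=
    (hF _ _ (genCounterTraj_counterTraj hN x)).trans
      (genCounterTraj_counterTraj hN x).state_N
  have hzero : stateCode (fun _ _ => false : Fin N → Fin l → Bool) = 0 := by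
    simp [stateCode, beta]
  have hcode (k : ℕ) : stateCode (F^[k] fun _ _ => false) = k % 2 ^ (N * l) := by
    rw [code_iterate_eq_add_mod (fun x => by rw [hFstep, stateCode_counterStep])
      (stateCode_lt _), hzero, zero_add]
  refine ⟨⟨fun _ _ => false, 2 ^ (N * l), le_rfl, ?_, fun k hk hkM hper => ?_⟩,
    fun k₁ k₂ hk₁ hk₂ heq => ?_⟩
  · exact stateCode_injective (by rw [hcode, Nat.mod_self, hzero])
  · have := hcode k
    rw [hper, hzero, Nat.mod_eq_of_lt hkM] at this
    omega
  · have := hcode k₁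
    rw [heq, hcode, Nat.mod_eq_of_lt hk₁, Nat.mod_eq_of_lt hk₂] at this
    exact this.symm
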